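/- Let P ∈ ℝ^{n×r}, Q ∈ ℝ^{ℓ×n}, R ∈ ℝ^{ℓ×r} satisfy im R ⊆ im Q and ker P ⊆ ker R (so that 𝒜 := { A ∈ ℝ^{n×n} : R = Q A P } is nonempty), and let C ∈ ℝ^{p×n}. Then rank [[A − λI],[C]] = n for all A ∈ 𝒜 and all λ ∈ ℂ (i.e., by the Hautus test, the pair (C,A) is observable for all A ∈ 𝒜) if and only if ker C ⊆ im P and rank [[R − λQP],[CP]] = rank P for all λ ∈ ℂ. Similarly, rank [[A − λI],[C]] = n for all A ∈ 𝒜 and all λ ∈ ℂ with |λ| ≥ 1 (i.e., (C,A) is detectable for all A ∈ 𝒜) if and only if ker C ⊆ im P and rank [[R − λQP],[CP]] = rank P for all λ ∈ ℂ with |λ| ≥ 1. -/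

import Mathlib

open Matrix

/-- Complexification of a real matrix. -/
noncomputable def cx {a b : ℕ} (M : Matrix (Fin a) (Fin b) ℝ) : Matrix (Fin a) (Fin b) ℂ :=
  M.map (algebraMap ℝ ℂ)

/-!
Since `ker P ⊆ ker R`, the rank condition on `[[R - λQP],[CP]]` says that its kernel is `ker P`.
Fix `A₀` with `R = Q A₀ P`; with generalized inverses `Q G Q = Q`, `P H P = P` one can take
`A₀ = G R H`. Adding to `A₀` a real matrix that vanishes on `im P`, or that takes values in `ker Q`,
stays in `𝒜`, and such perturbations can prescribe `A` on a vector outside `im P`, respectively on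
any real-linearly independent family. So a vector `x ∈ ker C \ im P` becomes a fixed vector of
some `A ∈ 𝒜`. If `v` is in the kernel of the pencil but `x = P v ≠ 0`, then `Q (A₀ x - λ x) = 0`:
when `re x` and `im x` are independent, some `A ∈ 𝒜` has `A x = λ x`; otherwise `x` is a complex
multiple of a real `y`, and `A y = μ y` for some `A ∈ 𝒜` with `μ = λ` if `λ` is real, `μ = 1` if
not (then `Q y = 0`). Either way `C x = 0` contradicts the Hautus condition, which is why the
argument works for every set of `λ` containing `1`. Conversely, an eigenvector `w ∈ ker C` of
`A ∈ 𝒜` is some `P v`, and this `v` lies in the kernel of the pencil.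
-/

section LinearAlgebra

variable {K : Type*} [Field K]

theorem LinearIndependent.exists_linearMap_apply_eq {ι V W : Type*}
    [AddCommGroup V] [Module K V] [AddCommGroup W] [Module K W] {x : ι → V}
    (hx : LinearIndependent K x) (z : ι → W) : ∃ g : V →ₗ[K] W, ∀ i, g (x i) = z i := by
  obtain ⟨g, hg⟩ := LinearMap.exists_extend (Finsupp.linearCombination K z ∘ₗ hx.repr)
  refine ⟨g, fun i => ?_⟩
  have := congr($hg ⟨x i, Submodule.subset_span (Set.mem_range_self i)⟩)
  simpa [hx.repr_eq_single i] using this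

variable {l m n : Type*} [Fintype n]

theorem Matrix.exists_mul_mul_eq_self [Fintype m] [DecidableEq n] (M : Matrix n m K) :
    ∃ G : Matrix m n K, M * G * M = M := by
  obtain ⟨s, hs⟩ := M.mulVecLin.rangeRestrict.exists_rightInverse_of_surjective
    M.mulVecLin.range_rangeRestrict
  obtain ⟨π, hπ⟩ := (LinearMap.range M.mulVecLin).subtype.exists_leftInverse_of_injective
    (Submodule.ker_subtype _)
  refine ⟨LinearMap.toMatrix' (s ∘ₗ π), ext_iff_mulVec.2 fun v => ?_⟩
  have hπM : π (M *ᵥ v) = M.mulVecLin.rangeRestrict v := congr($hπ (M.mulVecLin.rangeRestrict v))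
  have hsM := congr(((LinearMap.range M.mulVecLin).subtype ($hs (M.mulVecLin.rangeRestrict v))))
  simpa [← mulVec_mulVec, hπM] using hsM

theorem Matrix.rank_map_algebraMap [Fintype m] {L : Type*} [Field L] [Algebra K L]
    (M : Matrix m n K) : (M.map (algebraMap K L)).rank = M.rank := by
  obtain ⟨κ, a, ha, hspan, hli⟩ := exists_linearIndependent' K M.col
  have : Fintype κ := .ofInjective a ha
  have hli' : LinearIndependent L ((M.map (algebraMap K L)).col ∘ a) :=
    linearIndependent_algebraMap_comp_iff.2 hli
  suffices Submodule.span L (Set.range (M.map (algebraMap K L)).col) =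
      Submodule.span L (Set.range ((M.map (algebraMap K L)).col ∘ a)) by
    rw [rank_eq_finrank_span_cols, rank_eq_finrank_span_cols, this, ← hspan,
      finrank_span_eq_card hli, finrank_span_eq_card hli']
  refine le_antisymm (Submodule.span_le.2 ?_)
    (Submodule.span_mono (Set.range_comp_subset_range _ _))
  rintro _ ⟨j, rfl⟩
  obtain ⟨c, hc⟩ := Submodule.mem_span_range_iff_exists_fun K |>.1
    (hspan ▸ Submodule.subset_span (Set.mem_range_self j) : M.col j ∈ _)
  refine Submodule.mem_span_range_iff_exists_fun L |>.2 ⟨fun i => algebraMap K L (c i), ?_⟩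
  ext k
  simpa [Finset.sum_apply, Algebra.smul_def] using congr(algebraMap K L ($hc k))

theorem Matrix.rank_eq_rank_iff_ker_le {M : Matrix m n K} {N : Matrix l n K}
    (h : LinearMap.ker N.mulVecLin ≤ LinearMap.ker M.mulVecLin) :
    M.rank = N.rank ↔ LinearMap.ker M.mulVecLin ≤ LinearMap.ker N.mulVecLin := by
  have hM := LinearMap.finrank_range_add_finrank_ker M.mulVecLin
  have hN := LinearMap.finrank_range_add_finrank_ker N.mulVecLin
  rw [Matrix.rank, Matrix.rank]
  refine ⟨fun hMN => (Submodule.eq_of_le_of_finrank_le h (by omega)).ge, fun hMN => ?_⟩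
  rw [le_antisymm hMN h] at hM
  omega

theorem Matrix.rank_eq_card_width_iff [DecidableEq n] {M : Matrix m n K} :
    M.rank = Fintype.card n ↔ ∀ v, M *ᵥ v = 0 → v = 0 := by
  rw [← rank_one (n := n) (R := K), rank_eq_rank_iff_ker_le (by simp), mulVecLin_one,
    LinearMap.ker_id, le_bot_iff, ker_mulVecLin_eq_bot_iff]

theorem Matrix.fromRows_mulVec_eq_zero_iff {m' : Type*} {M : Matrix m n K} {N : Matrix m' n K}
    {v : n → K} : fromRows M N *ᵥ v = 0 ↔ M *ᵥ v = 0 ∧ N *ᵥ v = 0 := by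
  rw [fromRows_mulVec, ← Sum.elim_zero_zero, Sum.elim_eq_iff]

section AffineSet

variable {r : Type*} [DecidableEq n] [Fintype r]
  {P : Matrix n r K} {Q : Matrix l n K} {R : Matrix l r K}

theorem exists_eq_mul_mul_of_range_le_of_ker_le [Fintype l] [DecidableEq l]
    (him : LinearMap.range R.mulVecLin ≤ LinearMap.range Q.mulVecLin)
    (hker : LinearMap.ker P.mulVecLin ≤ LinearMap.ker R.mulVecLin) :
    ∃ A : Matrix n n K, R = Q * A * P := by
  obtain ⟨G, hG⟩ := Q.exists_mul_mul_eq_self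
  obtain ⟨H, hH⟩ := P.exists_mul_mul_eq_self
  have hQ : Q * G * R = R := ext_iff_mulVec.2 fun v => by
    obtain ⟨u, hu⟩ := him (LinearMap.mem_range_self R.mulVecLin v)
    simp only [mulVecLin_apply] at hu
    rw [← mulVec_mulVec, ← hu, mulVec_mulVec, hG]
  have hP : R * H * P = R := ext_iff_mulVec.2 fun v => by
    have : P *ᵥ (H *ᵥ (P *ᵥ v) - v) = 0 := by
      rw [mulVec_sub, mulVec_mulVec, mulVec_mulVec, hH, sub_self]
    have := hker this
    simpa [mulVec_sub, sub_eq_zero, mulVec_mulVec, Matrix.mul_assoc] using this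
  refine ⟨G * R * H, ?_⟩
  calc R = Q * G * (R * H * P) := by rw [hP, hQ]
    _ = Q * (G * R * H) * P := by simp only [Matrix.mul_assoc]

variable {A₀ : Matrix n n K} (hA₀ : R = Q * A₀ * P)
include hA₀

theorem exists_mulVec_eq_of_notMem_range {x : n → K}
    (hx : x ∉ LinearMap.range P.mulVecLin) (z : n → K) :
    ∃ A : Matrix n n K, R = Q * A * P ∧ A *ᵥ x = z := by
  obtain ⟨g, hg0, hgx⟩ := LinearMap.exists_extend_of_notMem 0 hx (z - A₀ *ᵥ x)
  have hgP : LinearMap.toMatrix' g * P = 0 := ext_iff_mulVec.2 fun v => by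
    simpa [← mulVec_mulVec] using congr($hg0 ⟨P *ᵥ v, v, rfl⟩)
  refine ⟨A₀ + LinearMap.toMatrix' g, ?_, ?_⟩
  · rw [Matrix.mul_add, Matrix.add_mul, ← hA₀, Matrix.mul_assoc Q, hgP, Matrix.mul_zero, add_zero]
  · rw [add_mulVec, LinearMap.toMatrix'_mulVec, hgx, add_sub_cancel]

omit [Fintype r] in
theorem exists_mulVec_eq_of_linearIndependent {ι : Type*} {x : ι → n → K}
    (hx : LinearIndependent K x) (z : ι → n → K) (hz : ∀ i, Q *ᵥ z i = Q *ᵥ (A₀ *ᵥ x i)) :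
    ∃ A : Matrix n n K, R = Q * A * P ∧ ∀ i, A *ᵥ x i = z i := by
  obtain ⟨g, hg⟩ := hx.exists_linearMap_apply_eq fun i =>
    (⟨z i - A₀ *ᵥ x i, by simp [mulVec_sub, hz]⟩ : LinearMap.ker Q.mulVecLin)
  have hQg : Q * LinearMap.toMatrix' ((LinearMap.ker Q.mulVecLin).subtype ∘ₗ g) = 0 :=
    ext_iff_mulVec.2 fun v => by
      rw [← mulVec_mulVec, LinearMap.toMatrix'_mulVec, zero_mulVec]
      exact LinearMap.mem_ker.1 (g v).2
  refine ⟨A₀ + LinearMap.toMatrix' ((LinearMap.ker Q.mulVecLin).subtype ∘ₗ g), ?_, fun i => ?_⟩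
  · rw [Matrix.mul_add, Matrix.add_mul, ← hA₀, hQg, Matrix.zero_mul, add_zero]
  · simp [add_mulVec, hg]

end AffineSet

end LinearAlgebra

section Complexification

open Complex

variable {a b : ℕ}

theorem cx_mul {c : ℕ} (M : Matrix (Fin a) (Fin b) ℝ) (N : Matrix (Fin b) (Fin c) ℝ) :
    cx (M * N) = cx M * cx N :=
  Matrix.map_mul

theorem rank_cx (M : Matrix (Fin a) (Fin b) ℝ) : (cx M).rank = M.rank :=
  M.rank_map_algebraMap

theorem re_cx_mulVec (M : Matrix (Fin a) (Fin b) ℝ) (w : Fin b → ℂ) :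
    re ∘ (cx M *ᵥ w) = M *ᵥ (re ∘ w) := by
  ext i
  simp [mulVec, dotProduct, cx, re_sum]

theorem im_cx_mulVec (M : Matrix (Fin a) (Fin b) ℝ) (w : Fin b → ℂ) :
    im ∘ (cx M *ᵥ w) = M *ᵥ (im ∘ w) := by
  ext i
  simp [mulVec, dotProduct, cx, im_sum]

theorem cx_mulVec_eq_iff {M : Matrix (Fin a) (Fin b) ℝ} {w : Fin b → ℂ} {z : Fin a → ℂ} :
    cx M *ᵥ w = z ↔ M *ᵥ (re ∘ w) = re ∘ z ∧ M *ᵥ (im ∘ w) = im ∘ z := by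
  rw [← re_cx_mulVec, ← im_cx_mulVec]
  refine ⟨fun h => h ▸ ⟨rfl, rfl⟩, fun ⟨hre, him⟩ => funext fun i => ext ?_ ?_⟩
  exacts [congrFun hre i, congrFun him i]

theorem cx_mulVec_ofReal (M : Matrix (Fin a) (Fin b) ℝ) (v : Fin b → ℝ) :
    cx M *ᵥ (ofReal ∘ v) = ofReal ∘ (M *ᵥ v) :=
  cx_mulVec_eq_iff.2 (by simp [Function.comp_def, ← Pi.zero_def])

theorem ker_cx_le_ker_cx {c : ℕ} {M : Matrix (Fin a) (Fin b) ℝ} {N : Matrix (Fin c) (Fin b) ℝ}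
    (h : LinearMap.ker M.mulVecLin ≤ LinearMap.ker N.mulVecLin) :
    LinearMap.ker (cx M).mulVecLin ≤ LinearMap.ker (cx N).mulVecLin := by
  intro w hw
  simp only [LinearMap.mem_ker, mulVecLin_apply, cx_mulVec_eq_iff] at hw ⊢
  exact ⟨h hw.1, h hw.2⟩

theorem ker_cx_le_range_cx {c : ℕ} {M : Matrix (Fin a) (Fin b) ℝ} {N : Matrix (Fin b) (Fin c) ℝ}
    (h : LinearMap.ker M.mulVecLin ≤ LinearMap.range N.mulVecLin) :
    LinearMap.ker (cx M).mulVecLin ≤ LinearMap.range (cx N).mulVecLin := by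
  intro w hw
  simp only [LinearMap.mem_ker, mulVecLin_apply, cx_mulVec_eq_iff] at hw
  obtain ⟨u, hu⟩ := h hw.1
  obtain ⟨v, hv⟩ := h hw.2
  have hre : re ∘ (ofReal ∘ u + I • ofReal ∘ v) = u := by ext; simp
  have him : im ∘ (ofReal ∘ u + I • ofReal ∘ v) = v := by ext; simp
  exact ⟨ofReal ∘ u + I • ofReal ∘ v,
    cx_mulVec_eq_iff.2 ⟨by rw [hre, ← hu]; rfl, by rw [him, ← hv]; rfl⟩⟩

theorem exists_smul_eq_ofReal_of_not_linearIndependent {w : Fin b → ℂ}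
    (h : ¬ LinearIndependent ℝ ![re ∘ w, im ∘ w]) :
    ∃ α : ℂ, α ≠ 0 ∧ ∃ y : Fin b → ℝ, α • w = ofReal ∘ y := by
  simp only [LinearIndependent.pair_iff, not_forall] at h
  obtain ⟨s, t, hst, hne⟩ := h
  -- the imaginary part of `(t + s I) • w` is `s • re ∘ w + t • im ∘ w = 0`
  refine ⟨⟨t, s⟩, fun h0 => hne ⟨congrArg im h0, congrArg re h0⟩, t • (re ∘ w) - s • (im ∘ w), ?_⟩
  funext i
  apply Complex.ext
  · simp
  · simpa [add_comm, mul_comm] using congrFun hst i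

end Complexification

section Hautus

open Complex

variable {n r l p : ℕ} {P : Matrix (Fin n) (Fin r) ℝ} {Q : Matrix (Fin l) (Fin n) ℝ}
  {R : Matrix (Fin l) (Fin r) ℝ} {C : Matrix (Fin p) (Fin n) ℝ}

def NoUnobservableMode (A : Matrix (Fin n) (Fin n) ℝ) (C : Matrix (Fin p) (Fin n) ℝ) (lam : ℂ) :
    Prop :=
  ∀ w : Fin n → ℂ, cx A *ᵥ w = lam • w → cx C *ᵥ w = 0 → w = 0

theorem rank_fromRows_eq_iff_noUnobservableMode (A : Matrix (Fin n) (Fin n) ℝ) (lam : ℂ) :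
    (fromRows (cx A - lam • 1) (cx C)).rank = n ↔ NoUnobservableMode A C lam := by
  have h := rank_eq_card_width_iff (M := fromRows (cx A - lam • 1) (cx C))
  rw [Fintype.card_fin] at h
  simp only [h, fromRows_mulVec_eq_zero_iff, sub_mulVec, smul_mulVec, one_mulVec, sub_eq_zero,
    and_imp, NoUnobservableMode]

theorem NoUnobservableMode.eq_zero_of_real {A : Matrix (Fin n) (Fin n) ℝ} {μ : ℝ}
    (h : NoUnobservableMode A C μ) {y : Fin n → ℝ} (hAy : A *ᵥ y = μ • y)
    (hCy : C *ᵥ y = 0) : y = 0 := by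
  have := h (ofReal ∘ y) (by rw [cx_mulVec_ofReal, hAy]; ext; simp)
    (by rw [cx_mulVec_ofReal, hCy]; ext; simp)
  ext i
  simpa using congrFun this i

theorem rank_fromRows_eq_rank_iff (hker : LinearMap.ker P.mulVecLin ≤ LinearMap.ker R.mulVecLin)
    (lam : ℂ) :
    (fromRows (cx R - lam • (cx Q * cx P)) (cx C * cx P)).rank = P.rank ↔
      ∀ v, cx R *ᵥ v = lam • cx Q *ᵥ (cx P *ᵥ v) → cx C *ᵥ (cx P *ᵥ v) = 0 → cx P *ᵥ v = 0 := by
  have hle : LinearMap.ker (cx P).mulVecLin ≤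
      LinearMap.ker (fromRows (cx R - lam • (cx Q * cx P)) (cx C * cx P)).mulVecLin := by
    intro v hv
    have hR := ker_cx_le_ker_cx hker hv
    simp_all [sub_mulVec, smul_mulVec, ← mulVec_mulVec]
  rw [← rank_cx P, rank_eq_rank_iff_ker_le hle]
  simp only [SetLike.le_def, LinearMap.mem_ker, mulVecLin_apply, fromRows_mulVec_eq_zero_iff,
    sub_mulVec, smul_mulVec, ← mulVec_mulVec, sub_eq_zero, and_imp]

theorem noUnobservableMode_of_ker_le_range
    (hC : LinearMap.ker C.mulVecLin ≤ LinearMap.range P.mulVecLin) {lam : ℂ}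
    (hK : ∀ v, cx R *ᵥ v = lam • cx Q *ᵥ (cx P *ᵥ v) → cx C *ᵥ (cx P *ᵥ v) = 0 →
      cx P *ᵥ v = 0)
    {A : Matrix (Fin n) (Fin n) ℝ} (hA : R = Q * A * P) : NoUnobservableMode A C lam := by
  intro w hAw hCw
  obtain ⟨v, rfl⟩ := ker_cx_le_range_cx hC (LinearMap.mem_ker.2 hCw)
  simp only [mulVecLin_apply] at hAw hCw ⊢
  refine hK v ?_ hCw
  rw [hA, cx_mul, cx_mul, ← mulVec_mulVec, ← mulVec_mulVec, hAw, mulVec_smul]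

section Witness

variable {A₀ : Matrix (Fin n) (Fin n) ℝ} (hA₀ : R = Q * A₀ * P)
include hA₀

theorem ker_le_range_of_forall_noUnobservableMode
    (H : ∀ A, R = Q * A * P → NoUnobservableMode A C 1) :
    LinearMap.ker C.mulVecLin ≤ LinearMap.range P.mulVecLin := by
  intro x hx
  by_contra hxP
  obtain ⟨A, hA, hAx⟩ := exists_mulVec_eq_of_notMem_range hA₀ hxP x
  have hx0 : x = 0 := (ofReal_one ▸ H A hA).eq_zero_of_real (by rw [hAx, one_smul]) hx
  exact hxP (hx0 ▸ zero_mem _)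

variable {S : Set ℂ} (hS1 : 1 ∈ S) (H : ∀ A, R = Q * A * P → ∀ μ ∈ S, NoUnobservableMode A C μ)
include hS1 H

theorem eq_zero_of_forall_noUnobservableMode_of_real {lam : ℂ} (hlam : lam ∈ S)
    {y : Fin n → ℝ} (hQ : ofReal ∘ (Q *ᵥ (A₀ *ᵥ y)) = lam • ofReal ∘ (Q *ᵥ y))
    (hCy : C *ᵥ y = 0) : y = 0 := by
  have hre : Q *ᵥ (A₀ *ᵥ y) = lam.re • Q *ᵥ y := by ext i; simpa using congr(re ($hQ i))
  have him : lam.im • Q *ᵥ y = 0 := by ext i; simpa using congr(im ($hQ i)).symm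
  obtain ⟨μ, hμS, hμ⟩ : ∃ μ : ℝ, (μ : ℂ) ∈ S ∧ Q *ᵥ (A₀ *ᵥ y) = μ • Q *ᵥ y := by
    by_cases hlam_im : lam.im = 0
    · exact ⟨lam.re, by rwa [show (lam.re : ℂ) = lam from ext rfl (by simp [hlam_im])], hre⟩
    · have hQy : Q *ᵥ y = 0 := (smul_eq_zero.1 him).resolve_left hlam_im
      exact ⟨1, by rwa [ofReal_one], by rw [hre, hQy, smul_zero, smul_zero]⟩
  by_contra hy
  obtain ⟨A, hA, hAy⟩ := exists_mulVec_eq_of_linearIndependent hA₀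
    (linearIndependent_unique_iff.2 hy : LinearIndependent ℝ fun _ : Unit => y)
    (fun _ => μ • y) (fun _ => by rw [mulVec_smul, hμ])
  exact hy ((H A hA μ hμS).eq_zero_of_real (hAy ()) hCy)

theorem eq_zero_of_forall_noUnobservableMode {lam : ℂ} (hlam : lam ∈ S) {x : Fin n → ℂ}
    (hQ : cx Q *ᵥ (cx A₀ *ᵥ x) = lam • cx Q *ᵥ x) (hCx : cx C *ᵥ x = 0) : x = 0 := by
  by_cases hli : LinearIndependent ℝ ![re ∘ x, im ∘ x]
  · obtain ⟨A, hA, hAx⟩ := exists_mulVec_eq_of_linearIndependent hA₀ hli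
      ![re ∘ (lam • x), im ∘ (lam • x)] (by
        rw [← mulVec_smul] at hQ
        have hre := congrArg (re ∘ ·) hQ
        have him := congrArg (im ∘ ·) hQ
        simp only [re_cx_mulVec, im_cx_mulVec] at hre him
        exact Fin.forall_fin_two.2 ⟨hre.symm, him.symm⟩)
    exact H A hA lam hlam x (cx_mulVec_eq_iff.2 ⟨hAx 0, hAx 1⟩) hCx
  · obtain ⟨α, hα, y, hy⟩ := exists_smul_eq_ofReal_of_not_linearIndependent hli
    have hy0 : y = 0 := by
      refine eq_zero_of_forall_noUnobservableMode_of_real hA₀ hS1 H hlam ?_ ?_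
      · rw [← cx_mulVec_ofReal, ← cx_mulVec_ofReal, ← cx_mulVec_ofReal, ← hy, mulVec_smul,
          mulVec_smul, hQ, mulVec_smul, smul_comm]
      · have h : cx C *ᵥ (ofReal ∘ y) = 0 := by rw [← hy, mulVec_smul, hCx, smul_zero]
        simpa [Function.comp_def, ← Pi.zero_def] using (cx_mulVec_eq_iff.1 h).1
    rw [hy0] at hy
    exact (smul_eq_zero.1 hy).resolve_left hα

end Witness

theorem forall_rank_fromRows_eq_iff
    (him : LinearMap.range R.mulVecLin ≤ LinearMap.range Q.mulVecLin)
    (hker : LinearMap.ker P.mulVecLin ≤ LinearMap.ker R.mulVecLin) {S : Set ℂ} (hS1 : 1 ∈ S) :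
    (∀ A : Matrix (Fin n) (Fin n) ℝ, R = Q * A * P → ∀ lam ∈ S,
        (fromRows (cx A - lam • 1) (cx C)).rank = n) ↔
      (LinearMap.ker C.mulVecLin ≤ LinearMap.range P.mulVecLin ∧
        ∀ lam ∈ S, (fromRows (cx R - lam • (cx Q * cx P)) (cx C * cx P)).rank = P.rank) := by
  obtain ⟨A₀, hA₀⟩ := exists_eq_mul_mul_of_range_le_of_ker_le him hker
  simp only [rank_fromRows_eq_iff_noUnobservableMode, rank_fromRows_eq_rank_iff hker]
  refine ⟨fun H => ⟨ker_le_range_of_forall_noUnobservableMode hA₀ fun A hA => H A hA 1 hS1,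
    fun lam hlam v hR hC => eq_zero_of_forall_noUnobservableMode hA₀ hS1 H hlam ?_ hC⟩,
    fun ⟨hC, hK⟩ A hA lam hlam => noUnobservableMode_of_ker_le_range hC (hK lam hlam) hA⟩
  rw [mulVec_mulVec, mulVec_mulVec, ← cx_mul, ← cx_mul, ← hA₀, hR]

end Hautus

/-- uniform Hautus test for observability / detectability of (C,A)
over the affine set 𝒜 = { A : R = Q A P }. -/
theorem uniform_hautus_observability_detectability (n r l p : ℕ)
    (P : Matrix (Fin n) (Fin r) ℝ) (Q : Matrix (Fin l) (Fin n) ℝ)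
    (R : Matrix (Fin l) (Fin r) ℝ) (C : Matrix (Fin p) (Fin n) ℝ)
    (him : LinearMap.range R.mulVecLin ≤ LinearMap.range Q.mulVecLin)
    (hker : LinearMap.ker P.mulVecLin ≤ LinearMap.ker R.mulVecLin) :
    ((∀ A : Matrix (Fin n) (Fin n) ℝ, R = Q * A * P → ∀ lam : ℂ,
        (fromRows (cx A - lam • 1) (cx C)).rank = n) ↔
      (LinearMap.ker C.mulVecLin ≤ LinearMap.range P.mulVecLin ∧
        ∀ lam : ℂ,
          (fromRows (cx R - lam • (cx Q * cx P)) (cx C * cx P)).rank = P.rank))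
    ∧
    ((∀ A : Matrix (Fin n) (Fin n) ℝ, R = Q * A * P → ∀ lam : ℂ, 1 ≤ ‖lam‖ →
        (fromRows (cx A - lam • 1) (cx C)).rank = n) ↔
      (LinearMap.ker C.mulVecLin ≤ LinearMap.range P.mulVecLin ∧
        ∀ lam : ℂ, 1 ≤ ‖lam‖ →
          (fromRows (cx R - lam • (cx Q * cx P)) (cx C * cx P)).rank = P.rank)) :=
  ⟨by simpa only [Set.mem_univ, forall_const] using
      forall_rank_fromRows_eq_iff (C := C) him hker (Set.mem_univ 1),
    forall_rank_fromRows_eq_iff him hker (S := {lam | 1 ≤ ‖lam‖}) (by simp)⟩
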